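/- arXiv:2303.07152 — 4 statements merged into one kernel-verified Lean document; each statement's English description precedes it below -/
import Mathlib

section
/- Let v ∈ ℝ^I be a vector indexed by a finite set I, let S be the index set selected by the noisy hard-thresholding procedure (iteratively choosing argmax over remaining indices of |v_j| + w_{ij} with fresh noise vectors w₁,…,w_s), and let ṽ = v_S be v restricted to S. Then for every R₁ ⊆ S and R₂ ⊆ S^c with |R₁| = |R₂|, and every c > 0: ‖v_{R₂}‖₂² ≤ (1 + 1/c) ‖v_{R₁}‖₂² + 4(1 + c) Σ_{i∈[s]} ‖w_i‖_∞². -/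
/-- Pairwise accuracy of noisy hard-thresholding selection: if `Ssel` iteratively
selects the argmax of `|v j| + w i j` over unselected indices, then for any equal-size
sets `R₁` of selected and `R₂` of unselected indices and any `c > 0`,
`‖v_{R₂}‖₂² ≤ (1 + 1/c)‖v_{R₁}‖₂² + 4(1 + c) Σᵢ ‖wᵢ‖_∞²`. -/
theorem noisy_ht_selection_bound
    {ι : Type*} [Fintype ι] [DecidableEq ι] [Nonempty ι]
    (s : ℕ) (v : ι → ℝ) (w : Fin s → ι → ℝ)
    (Ssel : Fin s → ι) (hinj : Function.Injective Ssel)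
    (hsel : ∀ (i : Fin s) (j : ι),
      (∀ i' : Fin s, i' < i → Ssel i' ≠ j) →
      |v j| + w i j ≤ |v (Ssel i)| + w i (Ssel i))
    (R₁ R₂ : Finset ι)
    (hR₁ : ∀ j ∈ R₁, ∃ i : Fin s, Ssel i = j)
    (hR₂ : ∀ j ∈ R₂, ∀ i : Fin s, Ssel i ≠ j)
    (hcard : R₁.card = R₂.card)
    (c : ℝ) (hc : 0 < c) :
    ∑ j ∈ R₂, (v j) ^ 2
      ≤ (1 + 1 / c) * ∑ j ∈ R₁, (v j) ^ 2
        + 4 * (1 + c) *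
          ∑ i : Fin s, (Finset.univ.sup' Finset.univ_nonempty fun j => |w i j|) ^ 2 := by
  set M : Fin s → ℝ := fun i => Finset.univ.sup' Finset.univ_nonempty fun j => |w i j| with hMdef
  have hMle : ∀ i j, |w i j| ≤ M i := fun i j => Finset.le_sup' (fun j => |w i j|) (Finset.mem_univ j)
  have hM0 : ∀ i, 0 ≤ M i := fun i =>
    le_trans (abs_nonneg _) (hMle i (Classical.arbitrary ι))
  let e : {x // x ∈ R₂} ≃ {x // x ∈ R₁} := (Finset.equivOfCardEq hcard).symm
  choose I hI using fun j : {x // x ∈ R₂} => hR₁ (e j).1 (e j).2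
  have hIinj : Function.Injective I := by
    intro a b hab
    apply e.injective
    apply Subtype.ext
    have : Ssel (I a) = Ssel (I b) := by rw [hab]
    rw [hI a, hI b] at this
    exact this
  have key : ∀ j : {x // x ∈ R₂},
      (v j.1) ^ 2 ≤ (1 + 1/c) * (v (e j).1) ^ 2 + 4 * (1 + c) * (M (I j)) ^ 2 := by
    intro j
    have h1 : |v j.1| + w (I j) j.1 ≤ |v (Ssel (I j))| + w (I j) (Ssel (I j)) := by
      apply hsel
      intro i' _
      exact hR₂ j.1 j.2 i'
    rw [hI j] at h1
    have h3 := abs_le.mp (hMle (I j) (e j).1)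
    have h4 := abs_le.mp (hMle (I j) j.1)
    have h2 : |v j.1| ≤ |v (e j).1| + 2 * M (I j) := by linarith
    have hb : (0:ℝ) ≤ |v (e j).1| := abs_nonneg _
    have hd : (0:ℝ) ≤ M (I j) := hM0 _
    have ha : (0:ℝ) ≤ |v j.1| := abs_nonneg _
    have hsq : (v j.1) ^ 2 ≤ (|v (e j).1| + 2 * M (I j)) ^ 2 := by
      rw [← sq_abs (v j.1)]
      nlinarith
    have hc' : (0:ℝ) < 1 / c := by positivity
    have hbd : 2 * |v (e j).1| * (2 * M (I j)) ≤
        (1/c) * |v (e j).1| ^ 2 + c * (2 * M (I j)) ^ 2 := by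
      have h := sq_nonneg (|v (e j).1| - c * (2 * M (I j)))
      have := mul_le_mul_of_nonneg_left h (le_of_lt hc')
      have hcc : (1/c) * c = 1 := by field_simp
      nlinarith
    nlinarith [sq_abs (v (e j).1)]
  have step : ∑ j ∈ R₂, (v j) ^ 2
      ≤ (1 + 1/c) * (∑ j : {x // x ∈ R₂}, (v (e j).1) ^ 2)
        + 4 * (1 + c) * ∑ j : {x // x ∈ R₂}, (M (I j)) ^ 2 := by
    rw [← Finset.sum_coe_sort R₂ (fun j => (v j) ^ 2)]
    calc ∑ j : {x // x ∈ R₂}, (v j.1) ^ 2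
        ≤ ∑ j : {x // x ∈ R₂},
            ((1 + 1/c) * (v (e j).1) ^ 2 + 4 * (1 + c) * (M (I j)) ^ 2) :=
          Finset.sum_le_sum (fun j _ => key j)
      _ = (1 + 1/c) * (∑ j : {x // x ∈ R₂}, (v (e j).1) ^ 2)
            + 4 * (1 + c) * ∑ j : {x // x ∈ R₂}, (M (I j)) ^ 2 := by
          rw [Finset.sum_add_distrib, Finset.mul_sum, Finset.mul_sum]
  have hsum1 : ∑ j : {x // x ∈ R₂}, (v (e j).1) ^ 2 = ∑ j ∈ R₁, (v j) ^ 2 := by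
    rw [Equiv.sum_comp e (fun k : {x // x ∈ R₁} => (v k.1) ^ 2)]
    exact Finset.sum_coe_sort R₁ (fun j => (v j) ^ 2)
  have hsum2 : ∑ j : {x // x ∈ R₂}, (M (I j)) ^ 2 ≤ ∑ i : Fin s, (M i) ^ 2 := by
    calc ∑ j : {x // x ∈ R₂}, (M (I j)) ^ 2
        = ∑ i ∈ Finset.univ.image I, (M i) ^ 2 :=
          (Finset.sum_image (f := fun i : Fin s => (M i) ^ 2) (g := I) (fun a _ b _ hab => hIinj hab)).symm
      _ ≤ ∑ i : Fin s, (M i) ^ 2 :=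
          Finset.sum_le_sum_of_subset_of_nonneg (Finset.subset_univ _)
            (fun i _ _ => sq_nonneg _)
  calc ∑ j ∈ R₂, (v j) ^ 2
      ≤ (1 + 1/c) * (∑ j : {x // x ∈ R₂}, (v (e j).1) ^ 2)
        + 4 * (1 + c) * ∑ j : {x // x ∈ R₂}, (M (I j)) ^ 2 := step
    _ ≤ (1 + 1/c) * ∑ j ∈ R₁, (v j) ^ 2 + 4 * (1 + c) * ∑ i : Fin s, (M i) ^ 2 := by
        rw [hsum1]
        have : (0:ℝ) ≤ 4 * (1 + c) := by positivity
        nlinarith [hsum2]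
end

section
/- With the noisy hard-thresholding output P̃_s(v) = v_S as above, for any s-sparse candidate v̂ with ‖v̂‖₀ = ŝ ≤ s and every c > 0: ‖P̃_s(v) − v‖₂² ≤ (1 + 1/c) · ((|I| − s)/(|I| − ŝ)) · ‖v̂ − v‖₂² + 4(1 + c) Σ_{i∈[s]} ‖w_i‖_∞². -/
open Finset

/-- card of the set of `Fin n` with value `< m`. -/
lemma aux_card_lt {n m : ℕ} (h : m ≤ n) :
    ((Finset.univ : Finset (Fin n)).filter fun k : Fin n => (k : ℕ) < m).card = m := by
  rw [show m = (Finset.range m).card from (Finset.card_range m).symm]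
  apply Finset.card_nbij (fun k : Fin n => (k : ℕ))
  · intro a ha; simp at ha ⊢; exact ha
  · intro a _ b _ hab; exact Fin.val_injective hab
  · intro x hx
    simp at hx ⊢
    exact ⟨⟨x, lt_of_lt_of_le hx h⟩, hx, rfl⟩

/-- average of the first `m` values of a monotone sequence is at most average of first `M`. -/
lemma aux_avg {n : ℕ} (a : Fin n → ℝ) (ha : Monotone a)
    {m M : ℕ} (hmM : m ≤ M) (hM : M ≤ n) :
    (M : ℝ) * ∑ k ∈ Finset.univ.filter (fun k : Fin n => (k : ℕ) < m), a k
      ≤ (m : ℝ) * ∑ k ∈ Finset.univ.filter (fun k : Fin n => (k : ℕ) < M), a k := by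
  set Rm := Finset.univ.filter (fun k : Fin n => (k : ℕ) < m) with hRm
  set RM := Finset.univ.filter (fun k : Fin n => (k : ℕ) < M) with hRM
  have hsub : Rm ⊆ RM := by intro k hk; simp [hRm, hRM] at hk ⊢; omega
  have hsplit : ∑ k ∈ RM \ Rm, a k + ∑ k ∈ Rm, a k = ∑ k ∈ RM, a k :=
    Finset.sum_sdiff hsub
  have hcardRm : Rm.card = m := aux_card_lt (le_trans hmM hM)
  have hcardRM : RM.card = M := aux_card_lt hM
  have hcardD : (RM \ Rm).card = M - m := by
    rw [Finset.card_sdiff_of_subset hsub, hcardRm, hcardRM]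
  have key : ∀ k ∈ RM \ Rm, ∑ i ∈ Rm, a i ≤ (m : ℝ) * a k := by
    intro k hk
    have hk' : m ≤ (k : ℕ) := by
      simp [hRm, hRM] at hk; omega
    calc ∑ i ∈ Rm, a i ≤ Rm.card • a k := by
          apply Finset.sum_le_card_nsmul
          intro i hi
          have : (i : ℕ) < m := by simp [hRm] at hi; exact hi
          exact ha (by rw [Fin.le_def]; omega)
      _ = (m : ℝ) * a k := by rw [hcardRm, nsmul_eq_mul]
  have h2 : ((M : ℝ) - m) * ∑ i ∈ Rm, a i ≤ (m : ℝ) * ∑ k ∈ RM \ Rm, a k := by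
    have h3 := Finset.sum_le_sum key
    rw [Finset.sum_const, hcardD, ← Finset.mul_sum] at h3
    have hcast : ((M - m : ℕ) : ℝ) = (M : ℝ) - m := by
      rw [Nat.cast_sub hmM]
    rw [nsmul_eq_mul, hcast] at h3
    exact h3
  nlinarith [hsplit, h2]

/-- sum over the `B.card` smallest indices is at most sum over `B`, for monotone nonneg `a`. -/
lemma aux_smallest {n : ℕ} (a : Fin n → ℝ) (ha : Monotone a) (h0 : ∀ k, 0 ≤ a k)
    (B : Finset (Fin n)) :
    ∑ k ∈ Finset.univ.filter (fun k : Fin n => (k : ℕ) < B.card), a k ≤ ∑ k ∈ B, a k := by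
  set M := B.card with hM
  set R := Finset.univ.filter (fun k : Fin n => (k : ℕ) < M) with hR
  have hMn : M ≤ n := by
    have := Finset.card_le_univ B
    simpa using this
  have hcardR : R.card = M := aux_card_lt hMn
  have hB : ∑ k ∈ B ∩ R, a k + ∑ k ∈ B \ R, a k = ∑ k ∈ B, a k :=
    Finset.sum_inter_add_sum_sdiff B R a
  have hRs : ∑ k ∈ R ∩ B, a k + ∑ k ∈ R \ B, a k = ∑ k ∈ R, a k :=
    Finset.sum_inter_add_sum_sdiff R B a
  have hic : B ∩ R = R ∩ B := Finset.inter_comm B R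
  have hcard12 : (B \ R).card = (R \ B).card := by
    have h1 : (B \ R).card + (B ∩ R).card = B.card := Finset.card_sdiff_add_card_inter B R
    have h2 : (R \ B).card + (R ∩ B).card = R.card := Finset.card_sdiff_add_card_inter R B
    rw [hic] at h1
    omega
  rcases Nat.eq_zero_or_pos (R \ B).card with hz | hpos
  · have hz2 : ∑ k ∈ R \ B, a k = 0 := by
      rw [Finset.card_eq_zero] at hz; rw [hz]; simp
    have hnn : 0 ≤ ∑ k ∈ B \ R, a k := Finset.sum_nonneg fun k _ => h0 k
    linarith [hB, hRs, hic ▸ le_refl (∑ k ∈ B ∩ R, a k), (by rw [hic] : ∑ k ∈ B ∩ R, a k = ∑ k ∈ R ∩ B, a k)]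
  · have hne : (B \ R).Nonempty := by
      rw [← Finset.card_pos, hcard12]; exact hpos
    obtain ⟨k0, hk0⟩ := hne
    have hk0' : M ≤ (k0 : ℕ) := by
      simp [hR] at hk0; omega
    have hMn' : M < n := lt_of_le_of_lt hk0' k0.isLt
    set kM : Fin n := ⟨M, hMn'⟩ with hkM
    have hub : ∑ k ∈ R \ B, a k ≤ (R \ B).card • a kM := by
      apply Finset.sum_le_card_nsmul
      intro k hk
      have : (k : ℕ) < M := by simp [hR] at hk; exact hk.1
      exact ha (by rw [Fin.le_def]; simp [hkM]; omega)
    have hlb : (B \ R).card • a kM ≤ ∑ k ∈ B \ R, a k := by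
      apply Finset.card_nsmul_le_sum
      intro k hk
      have : M ≤ (k : ℕ) := by simp [hR] at hk; omega
      exact ha (by rw [Fin.le_def]; simp [hkM]; omega)
    rw [hcard12] at hlb
    have : ∑ k ∈ R \ B, a k ≤ ∑ k ∈ B \ R, a k := le_trans hub hlb
    have heq : ∑ k ∈ B ∩ R, a k = ∑ k ∈ R ∩ B, a k := by rw [hic]
    linarith [hB, hRs]

lemma aux_sq {a b c : ℝ} (hc : 0 < c) (ha : 0 ≤ a) (hb : 0 ≤ b) (x : ℝ) (hx : |x| ≤ a + b) :
    x ^ 2 ≤ (1 + 1 / c) * a ^ 2 + (1 + c) * b ^ 2 := by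
  have h1 : x ^ 2 ≤ (a + b) ^ 2 := by
    nlinarith [abs_nonneg x, sq_abs x]
  have h2 : c * (1 / c) = 1 := mul_one_div_cancel hc.ne'
  nlinarith [sq_nonneg (a - c * b), hc.le, mul_pos hc hc]

/-- Overall accuracy of noisy hard thresholding: with `P̃ₛ(v) = v_S` the restriction of
`v` to the noisily selected set `S = range Ssel`, for any `ŝ`-sparse candidate `v̂`
with `ŝ ≤ s` and every `c > 0`,
`‖P̃ₛ(v) − v‖₂² ≤ (1 + 1/c)·((|I| − s)/(|I| − ŝ))·‖v̂ − v‖₂² + 4(1 + c) Σᵢ ‖wᵢ‖_∞²`.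
Note `‖P̃ₛ(v) − v‖₂² = Σ_{j ∉ S} vⱼ²`. -/
theorem noisy_ht_overall_accuracy
    {ι : Type*} [Fintype ι] [DecidableEq ι] [Nonempty ι]
    (s : ℕ) (v : ι → ℝ) (w : Fin s → ι → ℝ)
    (Ssel : Fin s → ι) (hinj : Function.Injective Ssel)
    (hsel : ∀ (i : Fin s) (j : ι),
      (∀ i' : Fin s, i' < i → Ssel i' ≠ j) →
      |v j| + w i j ≤ |v (Ssel i)| + w i (Ssel i))
    (vhat : ι → ℝ) (shat : ℕ)
    (hshat : (Finset.univ.filter fun j => vhat j ≠ 0).card = shat)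
    (hshat_le : shat ≤ s) (hs_le : s ≤ Fintype.card ι) (hshat_lt : shat < Fintype.card ι)
    (c : ℝ) (hc : 0 < c) :
    ∑ j ∈ Finset.univ.filter (fun j => ∀ i : Fin s, Ssel i ≠ j), (v j) ^ 2
      ≤ (1 + 1 / c) * (((Fintype.card ι : ℝ) - s) / ((Fintype.card ι : ℝ) - shat))
          * ∑ j : ι, (vhat j - v j) ^ 2
        + 4 * (1 + c) *
          ∑ i : Fin s, (Finset.univ.sup' Finset.univ_nonempty fun j => |w i j|) ^ 2 := by
  classical
  set n := Fintype.card ι with hn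
  set W : Fin s → ℝ := fun i => Finset.univ.sup' Finset.univ_nonempty fun j => |w i j| with hW
  have hWnn : ∀ i, 0 ≤ W i := fun i => by
    have := Finset.le_sup' (fun j => |w i j|) (Finset.mem_univ (Classical.arbitrary ι))
    exact le_trans (abs_nonneg _) this
  -- sorted bijection
  set e₀ : Fin n ≃ ι := (Fintype.equivFin ι).symm with he₀
  set f : Fin n → ℝ := fun k => (v (e₀ k)) ^ 2 with hf
  set σ := Tuple.sort f with hσ
  set e : Fin n ≃ ι := σ.trans e₀ with he
  set a : Fin n → ℝ := fun k => (v (e k)) ^ 2 with haa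
  have ha : Monotone a := Tuple.monotone_sort f
  have h0 : ∀ k, 0 ≤ a k := fun k => sq_nonneg _
  set S : Finset ι := Finset.univ.image Ssel with hS
  set Tc : Finset ι := (Finset.univ.filter fun k : Fin n => (k : ℕ) < n - s).image e with hTc
  have hgoalset : (Finset.univ.filter fun j => ∀ i : Fin s, Ssel i ≠ j) = Sᶜ := by
    ext j
    simp [hS, not_exists, eq_comm]
  rw [hgoalset]
  have hScard : S.card = s := by
    rw [hS, Finset.card_image_of_injective _ hinj, Finset.card_univ, Fintype.card_fin]
  have hTccard : Tc.card = n - s := by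
    rw [hTc, Finset.card_image_of_injective _ e.injective, aux_card_lt (Nat.sub_le n s)]
  have hTcsum : ∑ j ∈ Tc, (v j) ^ 2
      = ∑ k ∈ Finset.univ.filter (fun k : Fin n => (k : ℕ) < n - s), a k := by
    rw [hTc, Finset.sum_image (fun x _ y _ h => e.injective h)]
  -- chain 1 : sum over Tc is bounded via the sorted sequence
  have hshat_le_n : shat ≤ n := le_trans hshat_le hs_le
  set B : Finset (Fin n) := Finset.univ.filter (fun k : Fin n => vhat (e k) = 0) with hB
  have hBcard : B.card = n - shat := by
    have h1 : (Finset.univ.filter fun k : Fin n => ¬ vhat (e k) = 0).card = shat := by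
      rw [← hshat]
      apply Finset.card_nbij (⇑e)
      · intro k hk; simp at hk ⊢; exact hk
      · exact e.injective.injOn
      · intro j hj
        simp at hj ⊢
        exact hj
    have h2 : B.card + (Finset.univ.filter fun k : Fin n => ¬ vhat (e k) = 0).card = n := by
      rw [hB]
      simpa using Finset.card_filter_add_card_filter_not
        (s := (Finset.univ : Finset (Fin n))) (p := fun k : Fin n => vhat (e k) = 0)
    omega
  have hBsum : ∑ k ∈ B, a k = ∑ j ∈ Finset.univ.filter (fun j => vhat j = 0), (v j) ^ 2 := by
    apply Finset.sum_equiv e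
    · intro k; simp [hB]
    · intro k _; rfl
  have step1 : ((n : ℝ) - shat) * ∑ k ∈ Finset.univ.filter (fun k : Fin n => (k : ℕ) < n - s), a k
      ≤ ((n : ℝ) - s) * ∑ k ∈ Finset.univ.filter (fun k : Fin n => (k : ℕ) < n - shat), a k := by
    have h := aux_avg a ha (m := n - s) (M := n - shat) (by omega) (by omega)
    rw [Nat.cast_sub hs_le, Nat.cast_sub hshat_le_n] at h
    exact h
  have step2 : ∑ k ∈ Finset.univ.filter (fun k : Fin n => (k : ℕ) < n - shat), a k
      ≤ ∑ k ∈ B, a k := by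
    have h := aux_smallest a ha h0 B
    rw [hBcard] at h
    exact h
  have step3 : ∑ j ∈ Finset.univ.filter (fun j => vhat j = 0), (v j) ^ 2
      ≤ ∑ j : ι, (vhat j - v j) ^ 2 := by
    calc ∑ j ∈ Finset.univ.filter (fun j => vhat j = 0), (v j) ^ 2
        = ∑ j ∈ Finset.univ.filter (fun j => vhat j = 0), (vhat j - v j) ^ 2 := by
          apply Finset.sum_congr rfl
          intro j hj
          simp at hj
          rw [hj]; ring
      _ ≤ ∑ j : ι, (vhat j - v j) ^ 2 :=
          Finset.sum_le_sum_of_subset_of_nonneg (Finset.subset_univ _)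
            (fun j _ _ => sq_nonneg _)
  have hposd : (0 : ℝ) < (n : ℝ) - shat := by
    have : (shat : ℝ) < n := by exact_mod_cast hshat_lt
    linarith
  have hnsnn : (0 : ℝ) ≤ (n : ℝ) - s := by
    have : (s : ℝ) ≤ n := by exact_mod_cast hs_le
    linarith
  have chain1 : ∑ j ∈ Tc, (v j) ^ 2
      ≤ ((n : ℝ) - s) / ((n : ℝ) - shat) * ∑ j : ι, (vhat j - v j) ^ 2 := by
    rw [div_mul_eq_mul_div, le_div_iff₀ hposd, hTcsum]
    have h4 : ((n : ℝ) - s) * ∑ k ∈ B, a k ≤ ((n : ℝ) - s) * ∑ j : ι, (vhat j - v j) ^ 2 := by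
      apply mul_le_mul_of_nonneg_left _ hnsnn
      rw [hBsum]; exact step3
    have h5 : ((n : ℝ) - s) * ∑ k ∈ Finset.univ.filter (fun k : Fin n => (k : ℕ) < n - shat), a k
        ≤ ((n : ℝ) - s) * ∑ k ∈ B, a k := mul_le_mul_of_nonneg_left step2 hnsnn
    calc (∑ k ∈ Finset.univ.filter (fun k : Fin n => (k : ℕ) < n - s), a k) * ((n : ℝ) - shat)
        = ((n : ℝ) - shat) * ∑ k ∈ Finset.univ.filter (fun k : Fin n => (k : ℕ) < n - s), a k := by ring
      _ ≤ ((n : ℝ) - s) * ∑ k ∈ Finset.univ.filter (fun k : Fin n => (k : ℕ) < n - shat), a k := step1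
      _ ≤ ((n : ℝ) - s) * ∑ k ∈ B, a k := h5
      _ ≤ ((n : ℝ) - s) * ∑ j : ι, (vhat j - v j) ^ 2 := h4
  -- chain 2 : the pairing argument
  set K : Finset (Fin s) := Finset.univ.filter (fun i => Ssel i ∈ Tc) with hK
  have hSTc : S ∩ Tc = K.image Ssel := by
    ext j
    simp only [hS, hK, Finset.mem_inter, Finset.mem_image, Finset.mem_filter, Finset.mem_univ,
      true_and]
    constructor
    · rintro ⟨⟨i, rfl⟩, h⟩; exact ⟨i, h, rfl⟩
    · rintro ⟨i, h, rfl⟩; exact ⟨⟨i, rfl⟩, h⟩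
  have hKcard : (Sᶜ \ Tc).card = K.card := by
    have h1 : (Sᶜ \ Tc).card + (Sᶜ ∩ Tc).card = Sᶜ.card := Finset.card_sdiff_add_card_inter _ _
    have h2 : (Tc \ S).card + (Tc ∩ S).card = Tc.card := Finset.card_sdiff_add_card_inter _ _
    have h3 : Sᶜ ∩ Tc = Tc \ S := by
      ext j; simp [Finset.mem_sdiff, and_comm]
    have h4 : (Tc ∩ S).card = K.card := by
      rw [Finset.inter_comm, hSTc, Finset.card_image_of_injective _ hinj]
    have h5 : Sᶜ.card = n - s := by
      rw [Finset.card_compl, hScard]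
    rw [h3] at h1
    omega
  have himg : ∑ i ∈ K, (v (Ssel i)) ^ 2 = ∑ j ∈ S ∩ Tc, (v j) ^ 2 := by
    rw [hSTc, Finset.sum_image (fun x _ y _ h => hinj h)]
  have pairing : ∑ j ∈ Sᶜ \ Tc, (v j) ^ 2
      ≤ ∑ i ∈ K, ((1 + 1 / c) * (v (Ssel i)) ^ 2 + (1 + c) * (2 * W i) ^ 2) := by
    let φ : {x // x ∈ Sᶜ \ Tc} ≃ {x // x ∈ K} := Finset.equivOfCardEq hKcard
    have e1 : ∑ j ∈ Sᶜ \ Tc, (v j) ^ 2 = ∑ x : {x // x ∈ Sᶜ \ Tc}, (v (x : ι)) ^ 2 :=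
      (Finset.sum_coe_sort _ _).symm
    have e2 : ∑ x : {x // x ∈ Sᶜ \ Tc}, (v (x : ι)) ^ 2
        = ∑ y : {x // x ∈ K}, (v ((φ.symm y : ι))) ^ 2 :=
      (Equiv.sum_comp φ.symm (fun x : {x // x ∈ Sᶜ \ Tc} => (v (x : ι)) ^ 2)).symm
    have e3 : ∀ y : {x // x ∈ K},
        (v ((φ.symm y : ι))) ^ 2
          ≤ (1 + 1 / c) * (v (Ssel (y : Fin s))) ^ 2 + (1 + c) * (2 * W (y : Fin s)) ^ 2 := by
      intro y
      set i : Fin s := (y : Fin s) with hi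
      set t : ι := (φ.symm y : ι) with ht
      have htmem : t ∈ Sᶜ \ Tc := (φ.symm y).2
      have htS : t ∉ S := by
        have := (Finset.mem_sdiff.mp htmem).1
        simpa using this
      have hnotsel : ∀ i' : Fin s, Ssel i' ≠ t := by
        intro i' hEq
        exact htS (by rw [hS, ← hEq]; exact Finset.mem_image_of_mem _ (Finset.mem_univ _))
      have hkey := hsel i t (fun i' _ => hnotsel i')
      have hw1 : w i (Ssel i) ≤ W i := le_trans (le_abs_self _)
        (Finset.le_sup' (fun j => |w i j|) (Finset.mem_univ _))
      have hw2 : - w i t ≤ W i := by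
        have h1 : |w i t| ≤ W i := Finset.le_sup' (fun j => |w i j|) (Finset.mem_univ _)
        have h2 : - w i t ≤ |w i t| := neg_le_abs _
        linarith
      have habs : |v t| ≤ |v (Ssel i)| + 2 * W i := by linarith
      have hres := aux_sq hc (abs_nonneg (v (Ssel i))) (by linarith [hWnn i]) (v t) habs
      rwa [sq_abs] at hres
    have e4 : ∑ y : {x // x ∈ K},
          ((1 + 1 / c) * (v (Ssel (y : Fin s))) ^ 2 + (1 + c) * (2 * W (y : Fin s)) ^ 2)
        = ∑ i ∈ K, ((1 + 1 / c) * (v (Ssel i)) ^ 2 + (1 + c) * (2 * W i) ^ 2) :=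
      Finset.sum_coe_sort K (fun i => (1 + 1 / c) * (v (Ssel i)) ^ 2 + (1 + c) * (2 * W i) ^ 2)
    rw [e1, e2, ← e4]
    exact Finset.sum_le_sum fun y _ => e3 y
  -- assembling everything
  have hsplitS : ∑ j ∈ Sᶜ, (v j) ^ 2
      = ∑ j ∈ Sᶜ ∩ Tc, (v j) ^ 2 + ∑ j ∈ Sᶜ \ Tc, (v j) ^ 2 :=
    (Finset.sum_inter_add_sum_sdiff _ _ _).symm
  have hsplitT : ∑ j ∈ Tc, (v j) ^ 2
      = ∑ j ∈ S ∩ Tc, (v j) ^ 2 + ∑ j ∈ Sᶜ ∩ Tc, (v j) ^ 2 := by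
    have h3 : Sᶜ ∩ Tc = Tc \ S := by ext j; simp [Finset.mem_sdiff, and_comm]
    have h4 : S ∩ Tc = Tc ∩ S := Finset.inter_comm _ _
    rw [h3, h4]
    exact (Finset.sum_inter_add_sum_sdiff _ _ _).symm
  have hpair2 : ∑ i ∈ K, ((1 + 1 / c) * (v (Ssel i)) ^ 2 + (1 + c) * (2 * W i) ^ 2)
      = (1 + 1 / c) * ∑ j ∈ S ∩ Tc, (v j) ^ 2 + 4 * (1 + c) * ∑ i ∈ K, (W i) ^ 2 := by
    rw [Finset.sum_add_distrib, ← Finset.mul_sum, himg]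
    congr 1
    rw [← Finset.mul_sum, Finset.mul_sum, Finset.mul_sum]
    apply Finset.sum_congr rfl
    intro i _
    ring
  have hWK : ∑ i ∈ K, (W i) ^ 2 ≤ ∑ i : Fin s, (W i) ^ 2 :=
    Finset.sum_le_sum_of_subset_of_nonneg (Finset.subset_univ _) (fun i _ _ => sq_nonneg _)
  have hA1nn : 0 ≤ ∑ j ∈ Sᶜ ∩ Tc, (v j) ^ 2 := Finset.sum_nonneg fun j _ => sq_nonneg _
  have hA2nn : 0 ≤ ∑ j ∈ S ∩ Tc, (v j) ^ 2 := Finset.sum_nonneg fun j _ => sq_nonneg _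
  have hcinv : 0 ≤ 1 / c := by positivity
  have hc1 : (0:ℝ) ≤ 1 + c := by linarith
  have h1c : (0:ℝ) ≤ 1 + 1 / c := by linarith
  have hfinal1 : (1 + 1 / c) * ∑ j ∈ Tc, (v j) ^ 2
      ≤ (1 + 1 / c) * (((n : ℝ) - s) / ((n : ℝ) - shat) * ∑ j : ι, (vhat j - v j) ^ 2) :=
    mul_le_mul_of_nonneg_left chain1 h1c
  have hfinal2 : 4 * (1 + c) * ∑ i ∈ K, (W i) ^ 2 ≤ 4 * (1 + c) * ∑ i : Fin s, (W i) ^ 2 := by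
    apply mul_le_mul_of_nonneg_left hWK
    linarith
  rw [hsplitS]
  have hmid : ∑ j ∈ Sᶜ \ Tc, (v j) ^ 2
      ≤ (1 + 1 / c) * ∑ j ∈ S ∩ Tc, (v j) ^ 2 + 4 * (1 + c) * ∑ i ∈ K, (W i) ^ 2 := by
    rw [← hpair2]; exact pairing
  have hT' : (1 + 1 / c) * ∑ j ∈ Tc, (v j) ^ 2
      = (1 + 1 / c) * ∑ j ∈ S ∩ Tc, (v j) ^ 2 + (1 + 1 / c) * ∑ j ∈ Sᶜ ∩ Tc, (v j) ^ 2 := by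
    rw [hsplitT]; ring
  have hA1le : ∑ j ∈ Sᶜ ∩ Tc, (v j) ^ 2 ≤ (1 + 1 / c) * ∑ j ∈ Sᶜ ∩ Tc, (v j) ^ 2 := by
    nlinarith
  linarith [hfinal1, hfinal2, hmid]
end

section
/- If the privacy-constrained minimax risk over Θ_k(α,C) satisfies inf_{M ∈ 𝓜_{ε,δ}} sup_{θ ∈ Θ_k(α,C)} E‖M − θ‖₂² ≳ min(k^{−2α}, k²/(n²ε²)) for every k ≥ 1, and Θ_k embedded into the periodic Sobolev class preserves the risk via Parseval's identity (∫₀¹(f̂ − f)² dx ≥ Σ_{j≤k}(θ̂_j − θ_j)²), then choosing k ≍ (nε)^{1/(α+1)} yields inf_{f̂ ∈ 𝓜_{ε,δ}} sup_{f ∈ W̃(α,C)} E∫₀¹(f̂(x) − f(x))² dx ≳ n^{−2α/(2α+1)} + (nε)^{−2α/(α+1)}. -/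
/-- Optimizing the finite-dimensional privacy-constrained lower bounds: if the minimax
risk over each `Θ_k(α, C)` is at least `c₀ · min(k^{−2α}, k²/(n²ε²))`, the
nonparametric risk dominates each finite-dimensional risk (via Parseval), and the
classical non-private lower bound `c₁ n^{−2α/(2α+1)}` holds, then the nonparametric
privacy-constrained minimax risk is at least a constant multiple of
`n^{−2α/(2α+1)} + (nε)^{−2α/(α+1)}` (choosing `k ≍ (nε)^{1/(α+1)}`). -/
theorem nonparametric_lower_bound_rate
    (α : ℝ) (hα : 1 ≤ α)
    -- finite-dimensional minimax risks `Rk n ε k` and nonparametric risk `Rnp n ε`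
    (Rk : ℕ → ℝ → ℕ → ℝ) (Rnp : ℕ → ℝ → ℝ)
    (c₀ c₁ : ℝ) (hc₀ : 0 < c₀) (hc₁ : 0 < c₁)
    -- the score-attack finite-dimensional lower bound, for every k ≥ 1
    (hlb : ∀ (n : ℕ) (ε : ℝ) (k : ℕ), 0 < ε → ε < 1 → 1 ≤ k →
      Rk n ε k ≥ c₀ * min ((k : ℝ) ^ (-(2 * α))) ((k : ℝ) ^ 2 / ((n : ℝ) ^ 2 * ε ^ 2)))
    -- embedding of the finite-dimensional problem preserves risk (Parseval)
    (hembed : ∀ (n : ℕ) (ε : ℝ) (k : ℕ), 1 ≤ k → Rnp n ε ≥ Rk n ε k)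
    -- the classical non-private minimax lower bound
    (hnonpriv : ∀ (n : ℕ) (ε : ℝ), Rnp n ε ≥ c₁ * (n : ℝ) ^ (-(2 * α) / (2 * α + 1))) :
    ∃ c : ℝ, 0 < c ∧ ∀ (n : ℕ) (ε : ℝ), 0 < ε → ε < 1 → 1 ≤ (n : ℝ) * ε →
      Rnp n ε ≥ c * ((n : ℝ) ^ (-(2 * α) / (2 * α + 1))
        + ((n : ℝ) * ε) ^ (-(2 * α) / (α + 1))) := by
  have h2 : (0:ℝ) < (2:ℝ) ^ (-(2*α)) := Real.rpow_pos_of_pos two_pos _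
  refine ⟨min (c₀ * (2:ℝ) ^ (-(2*α))) c₁ / 2, by positivity, ?_⟩
  intro n ε hε hε1 hnε
  have hαpos : (0:ℝ) < α + 1 := by linarith
  have hnεpos : (0:ℝ) < (n:ℝ) * ε := lt_of_lt_of_le one_pos hnε
  set t : ℝ := ((n:ℝ) * ε) ^ ((1:ℝ)/(α+1)) with ht
  have ht1 : 1 ≤ t := Real.one_le_rpow hnε (by positivity)
  have htpos : 0 < t := lt_of_lt_of_le one_pos ht1
  set k : ℕ := ⌈t⌉₊ with hk
  have hk1 : 1 ≤ k := Nat.one_le_ceil_iff.mpr htpos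
  have hkt : t ≤ (k:ℝ) := Nat.le_ceil t
  have hk2t : (k:ℝ) ≤ 2 * t := by
    calc (k:ℝ) ≤ t + 1 := le_of_lt (Nat.ceil_lt_add_one htpos.le)
    _ ≤ 2 * t := by linarith
  -- key identity: t^(-(2α)) = (nε)^(-(2α)/(α+1))
  have hB : ((n:ℝ) * ε) ^ (-(2 * α) / (α + 1)) = t ^ (-(2*α)) := by
    rw [ht, ← Real.rpow_mul hnεpos.le]
    congr 1
    field_simp
  have hBpos : 0 < ((n:ℝ) * ε) ^ (-(2 * α) / (α + 1)) := Real.rpow_pos_of_pos hnεpos _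
  -- bound 1
  have hb1 : (2:ℝ) ^ (-(2*α)) * ((n:ℝ) * ε) ^ (-(2 * α) / (α + 1)) ≤ (k:ℝ) ^ (-(2*α)) := by
    have := Real.rpow_le_rpow_of_nonpos (by positivity : (0:ℝ) < (k:ℝ))
      hk2t (by linarith : -(2*α) ≤ 0)
    calc (2:ℝ) ^ (-(2*α)) * ((n:ℝ) * ε) ^ (-(2 * α) / (α + 1))
        = (2 * t) ^ (-(2*α)) := by
          rw [hB, Real.mul_rpow two_pos.le htpos.le]
      _ ≤ (k:ℝ) ^ (-(2*α)) := this
  -- bound 2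
  have hb2 : ((n:ℝ) * ε) ^ (-(2 * α) / (α + 1)) ≤ (k:ℝ) ^ 2 / ((n:ℝ)^2 * ε^2) := by
    have ht2 : t ^ (2:ℕ) = ((n:ℝ) * ε) ^ ((2:ℝ)/(α+1)) := by
      rw [ht, ← Real.rpow_natCast (((n:ℝ)*ε) ^ ((1:ℝ)/(α+1))) 2, ← Real.rpow_mul hnεpos.le]
      congr 1
      push_cast
      ring
    have hkk : t ^ (2:ℕ) ≤ (k:ℝ) ^ (2:ℕ) := pow_le_pow_left₀ htpos.le hkt 2
    have hden : ((n:ℝ)^2 * ε^2) = ((n:ℝ) * ε) ^ (2:ℕ) := by ring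
    have hinv : ((((n:ℝ) * ε) ^ (2:ℕ)):ℝ)⁻¹ = ((n:ℝ) * ε) ^ (-(2:ℝ)) := by
      rw [← Real.rpow_two, ← Real.rpow_neg hnεpos.le]
    rw [hden]
    have hrw : (k:ℝ)^2 / ((n:ℝ)*ε)^2 = (k:ℝ)^(2:ℕ) * ((n:ℝ)*ε)^(-(2:ℝ)) := by
      rw [div_eq_mul_inv, hinv]
    rw [hrw]
    calc ((n:ℝ) * ε) ^ (-(2 * α) / (α + 1))
        = ((n:ℝ) * ε) ^ ((2:ℝ)/(α+1)) * ((n:ℝ) * ε) ^ (-(2:ℝ)) := by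
          rw [← Real.rpow_add hnεpos]; congr 1; field_simp; ring
      _ ≤ (k:ℝ) ^ (2:ℕ) * ((n:ℝ) * ε) ^ (-(2:ℝ)) := by
          apply mul_le_mul_of_nonneg_right _ (Real.rpow_nonneg hnεpos.le _)
          rw [← ht2]; exact hkk
  -- combine
  have hmin : c₀ * (2:ℝ) ^ (-(2*α)) * (((n:ℝ) * ε) ^ (-(2 * α) / (α + 1)))
      ≤ Rnp n ε := by
    have h1 := hlb n ε k hε hε1 hk1
    have h2' := hembed n ε k hk1
    have : (2:ℝ) ^ (-(2*α)) * ((n:ℝ) * ε) ^ (-(2 * α) / (α + 1)) ≤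
        min ((k : ℝ) ^ (-(2 * α))) ((k : ℝ) ^ 2 / ((n : ℝ) ^ 2 * ε ^ 2)) := by
      refine le_min hb1 ?_
      calc (2:ℝ) ^ (-(2*α)) * ((n:ℝ) * ε) ^ (-(2 * α) / (α + 1))
          ≤ 1 * ((n:ℝ) * ε) ^ (-(2 * α) / (α + 1)) := by
            apply mul_le_mul_of_nonneg_right _ hBpos.le
            exact Real.rpow_le_one_of_one_le_of_nonpos one_le_two (by linarith)
        _ = _ := one_mul _
        _ ≤ _ := hb2
    calc c₀ * (2:ℝ) ^ (-(2*α)) * (((n:ℝ) * ε) ^ (-(2 * α) / (α + 1)))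
        = c₀ * ((2:ℝ) ^ (-(2*α)) * ((n:ℝ) * ε) ^ (-(2 * α) / (α + 1))) := by ring
      _ ≤ c₀ * min ((k : ℝ) ^ (-(2 * α))) ((k : ℝ) ^ 2 / ((n : ℝ) ^ 2 * ε ^ 2)) :=
          mul_le_mul_of_nonneg_left this hc₀.le
      _ ≤ Rk n ε k := h1
      _ ≤ Rnp n ε := h2'
  have hA := hnonpriv n ε
  have hApos : 0 < (n:ℝ) ^ (-(2 * α) / (2 * α + 1)) := by
    have hn : (0:ℝ) < n := by
      by_contra h
      push_neg at h
      nlinarith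
    exact Real.rpow_pos_of_pos hn _
  set cm := min (c₀ * (2:ℝ) ^ (-(2*α))) c₁ with hcm
  calc cm / 2 * ((n : ℝ) ^ (-(2 * α) / (2 * α + 1)) + ((n : ℝ) * ε) ^ (-(2 * α) / (α + 1)))
      = cm / 2 * (n : ℝ) ^ (-(2 * α) / (2 * α + 1))
        + cm / 2 * ((n : ℝ) * ε) ^ (-(2 * α) / (α + 1)) := by ring
    _ ≤ (c₁/2) * (n : ℝ) ^ (-(2 * α) / (2 * α + 1))
        + (c₀ * (2:ℝ) ^ (-(2*α))/2) * ((n : ℝ) * ε) ^ (-(2 * α) / (α + 1)) := by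
        gcongr
        · exact min_le_right _ _
        · exact min_le_left _ _
    _ ≤ Rnp n ε / 2 + Rnp n ε / 2 := by
        gcongr ?_ + ?_
        · linarith
        · rw [div_mul_eq_mul_div]
          linarith
    _ = Rnp n ε := by ring
end

section
/- Consider the Bradley–Terry–Luce regularized objective R̃(θ) = L(θ;y) + (γ/2)‖θ‖₂² + wᵀθ, where L(θ;y) = Σ_{(i,j)∈𝒢} [−y_{ij}(e_i − e_j)ᵀθ + log(1 + exp((e_i − e_j)ᵀθ))]. Then for any θ̄ in the feasible set {‖θ‖_∞ ≤ 1}, the Hessian satisfies ∇²R̃(θ̄) ⪰ γ I + (1/10) L_𝒢, where L_𝒢 = Σ_{(a,b)∈𝒢}(e_a − e_b)(e_a − e_b)ᵀ is the graph Laplacian of the comparison graph 𝒢. -/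
lemma hasDerivAt_logexp (a b t : ℝ) :
    HasDerivAt (fun t : ℝ => Real.log (1 + Real.exp (a + t * b)))
      ((Real.exp (a + t * b) / (1 + Real.exp (a + t * b))) * b) t := by
  have h1 : HasDerivAt (fun t : ℝ => a + t * b) b t :=
    by simpa using ((hasDerivAt_id t).mul_const b).const_add a
  have he : HasDerivAt (fun x : ℝ => 1 + Real.exp x) (Real.exp (a + t * b)) (a + t * b) :=
    (Real.hasDerivAt_exp _).const_add 1
  have h2 : HasDerivAt (fun x : ℝ => Real.log (1 + Real.exp x))
      (Real.exp (a + t * b) / (1 + Real.exp (a + t * b))) (a + t * b) :=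
    he.log (by positivity)
  exact h2.comp t h1

lemma hasDerivAt_sig (a b t : ℝ) :
    HasDerivAt (fun t : ℝ => Real.exp (a + t * b) / (1 + Real.exp (a + t * b)))
      ((Real.exp (a + t * b) / (1 + Real.exp (a + t * b)) ^ 2) * b) t := by
  have h1 : HasDerivAt (fun t : ℝ => a + t * b) b t :=
    by simpa using ((hasDerivAt_id t).mul_const b).const_add a
  have hnum : HasDerivAt (fun t : ℝ => Real.exp (a + t * b)) (Real.exp (a + t * b) * b) t :=
    (Real.hasDerivAt_exp _).comp t h1
  have hden : HasDerivAt (fun t : ℝ => 1 + Real.exp (a + t * b)) (Real.exp (a + t * b) * b) t :=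
    hnum.const_add 1
  have h := hnum.fun_div hden (by positivity)
  refine h.congr_deriv ?_
  have hpos : (0:ℝ) < 1 + Real.exp (a + t * b) := by positivity
  ring

lemma sig_deriv_ge (a : ℝ) (ha : |a| ≤ 2) :
    Real.exp a / (1 + Real.exp a) ^ 2 ≥ 1 / 10 := by
  obtain ⟨h1, h2⟩ := abs_le.mp ha
  set x := Real.exp a with hx
  have hxpos : 0 < x := Real.exp_pos a
  have he1 : Real.exp 1 < 2.7182818286 := Real.exp_one_lt_d9
  have he2 : Real.exp 1 > 2.7182818283 := Real.exp_one_gt_d9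
  have hexp2 : Real.exp 2 = Real.exp 1 * Real.exp 1 := by
    rw [← Real.exp_add]; norm_num
  have hub : x ≤ Real.exp 2 := Real.exp_le_exp.mpr h2
  have hlb : Real.exp (-2) ≤ x := Real.exp_le_exp.mpr h1
  have hlb' : (27/200 : ℝ) ≤ x := by
    have : Real.exp (-2) = (Real.exp 2)⁻¹ := by
      rw [← Real.exp_neg]
    have h2pos : 0 < Real.exp 2 := Real.exp_pos 2
    have : (27/200 : ℝ) ≤ (Real.exp 2)⁻¹ := by
      rw [le_inv_comm₀ (by norm_num) h2pos]
      nlinarith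
    calc (27/200:ℝ) ≤ (Real.exp 2)⁻¹ := this
      _ = Real.exp (-2) := (Real.exp_neg 2).symm
      _ ≤ x := hlb
  have hub' : x ≤ (7.39 : ℝ) := by nlinarith
  rw [ge_iff_le, div_le_div_iff₀ (by norm_num) (by positivity)]
  nlinarith [mul_nonneg (sub_nonneg.2 hlb') (sub_nonneg.2 hub')]


/-- The Hessian of the regularized Bradley–Terry–Luce objective
`R̃(θ) = Σ_{(i,j)∈𝒢}[−y_{ij}(θᵢ − θⱼ) + log(1 + exp(θᵢ − θⱼ))] + (γ/2)‖θ‖₂² + wᵀθ`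
satisfies `∇²R̃(θ̄) ⪰ γI + (1/10)L_𝒢` for every `θ̄` with `‖θ̄‖_∞ ≤ 1`, expressed via
the second directional derivative: for all `u`,
`uᵀ∇²R̃(θ̄)u ≥ γ‖u‖₂² + (1/10) Σ_{(a,b)∈𝒢}(u_a − u_b)²`. -/
theorem btl_hessian_lower_bound
    (n : ℕ) (γ : ℝ) (𝒢 : Finset (Fin n × Fin n))
    (y : Fin n × Fin n → ℝ) (w : Fin n → ℝ)
    (Rt : (Fin n → ℝ) → ℝ)
    (hR : Rt = fun θ =>
      (∑ p ∈ 𝒢, (-(y p) * (θ p.1 - θ p.2) + Real.log (1 + Real.exp (θ p.1 - θ p.2))))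
        + (γ / 2) * (∑ j, (θ j) ^ 2) + ∑ j, w j * θ j)
    (θbar : Fin n → ℝ) (hθbar : ∀ j, |θbar j| ≤ 1) :
    ∀ u : Fin n → ℝ,
      deriv (deriv fun t : ℝ => Rt (θbar + t • u)) 0
        ≥ γ * (∑ j, (u j) ^ 2) + (1 / 10) * ∑ p ∈ 𝒢, (u p.1 - u p.2) ^ 2 := by
  intro u
  set A : Fin n × Fin n → ℝ := fun p => θbar p.1 - θbar p.2 with hA
  set B : Fin n × Fin n → ℝ := fun p => u p.1 - u p.2 with hB
  have hg : (fun t : ℝ => Rt (θbar + t • u)) = fun t =>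
      (∑ p ∈ 𝒢, (-(y p) * (A p + t * B p) + Real.log (1 + Real.exp (A p + t * B p))))
        + (γ / 2) * (∑ j, (θbar j + t * u j) ^ 2) + ∑ j, w j * (θbar j + t * u j) := by
    subst hR
    funext t
    simp only [Pi.add_apply, Pi.smul_apply, smul_eq_mul, hA, hB]
    have e1 : ∀ p : Fin n × Fin n,
        θbar p.1 + t * u p.1 - (θbar p.2 + t * u p.2)
          = (θbar p.1 - θbar p.2) + t * (u p.1 - u p.2) := fun p => by ring
    simp_rw [e1]
  set G : ℝ → ℝ := fun t =>
      (∑ p ∈ 𝒢, (-(y p) * B p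
          + (Real.exp (A p + t * B p) / (1 + Real.exp (A p + t * B p))) * B p))
        + (γ / 2) * (∑ j, 2 * (θbar j + t * u j) * u j) + ∑ j, w j * u j with hG
  have key1 : ∀ t : ℝ, HasDerivAt (fun t : ℝ => Rt (θbar + t • u)) (G t) t := by
    intro t
    rw [hg]
    apply HasDerivAt.add
    apply HasDerivAt.add
    · apply HasDerivAt.fun_sum
      intro p _
      have hlin : HasDerivAt (fun t : ℝ => A p + t * B p) (B p) t := by
        simpa using ((hasDerivAt_id t).mul_const (B p)).const_add (A p)
      have h1 : HasDerivAt (fun t : ℝ => -(y p) * (A p + t * B p)) (-(y p) * B p) t :=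
        hlin.const_mul _
      exact h1.add (hasDerivAt_logexp (A p) (B p) t)
    · have hs : HasDerivAt (fun t : ℝ => ∑ j, (θbar j + t * u j) ^ 2)
          (∑ j, 2 * (θbar j + t * u j) * u j) t := by
        apply HasDerivAt.fun_sum
        intro j _
        have hlin : HasDerivAt (fun t : ℝ => θbar j + t * u j) (u j) t := by
          simpa using ((hasDerivAt_id t).mul_const (u j)).const_add (θbar j)
        simpa using hlin.fun_pow 2
      exact hs.const_mul _
    · apply HasDerivAt.fun_sum
      intro j _
      have hlin : HasDerivAt (fun t : ℝ => θbar j + t * u j) (u j) t := by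
        simpa using ((hasDerivAt_id t).mul_const (u j)).const_add (θbar j)
      exact hlin.const_mul _
  have hderiv1 : deriv (fun t : ℝ => Rt (θbar + t • u)) = G := by
    funext t; exact (key1 t).deriv
  have key2 : HasDerivAt G
      ((∑ p ∈ 𝒢, (Real.exp (A p + 0 * B p) / (1 + Real.exp (A p + 0 * B p)) ^ 2) * B p * B p)
        + (γ / 2) * (∑ j, 2 * u j * u j) + 0) 0 := by
    apply HasDerivAt.add
    apply HasDerivAt.add
    · apply HasDerivAt.fun_sum
      intro p _
      have h2 := ((hasDerivAt_sig (A p) (B p) 0).mul_const (B p))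
      simpa using (hasDerivAt_const (0:ℝ) (-(y p) * B p)).fun_add h2
    · have hs : HasDerivAt (fun t : ℝ => ∑ j, 2 * (θbar j + t * u j) * u j)
          (∑ j, 2 * u j * u j) 0 := by
        apply HasDerivAt.fun_sum
        intro j _
        have hlin : HasDerivAt (fun t : ℝ => θbar j + t * u j) (u j) 0 := by
          simpa using ((hasDerivAt_id (0:ℝ)).mul_const (u j)).const_add (θbar j)
        have := (hlin.const_mul 2).mul_const (u j)
        simpa [mul_comm, mul_left_comm] using this
      exact hs.const_mul _
    · exact hasDerivAt_const _ _
  rw [hderiv1]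
  rw [key2.deriv]
  have hmid : (γ / 2) * (∑ j, 2 * u j * u j) = γ * ∑ j, (u j) ^ 2 := by
    rw [Finset.mul_sum, Finset.mul_sum]
    congr 1; funext j; ring
  have hsum : (∑ p ∈ 𝒢, (Real.exp (A p + 0 * B p) / (1 + Real.exp (A p + 0 * B p)) ^ 2) * B p * B p)
      ≥ (1 / 10) * ∑ p ∈ 𝒢, (u p.1 - u p.2) ^ 2 := by
    rw [Finset.mul_sum]
    apply Finset.sum_le_sum
    intro p _
    have hAp : |A p| ≤ 2 := by
      have := hθbar p.1
      have := hθbar p.2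
      simp only [hA]
      rw [abs_le] at *
      constructor <;> linarith [(abs_le.mp (hθbar p.1)).1, (abs_le.mp (hθbar p.1)).2,
        (abs_le.mp (hθbar p.2)).1, (abs_le.mp (hθbar p.2)).2]
    have hge := sig_deriv_ge (A p) hAp
    have : (Real.exp (A p + 0 * B p) / (1 + Real.exp (A p + 0 * B p)) ^ 2) * B p * B p
        = (Real.exp (A p) / (1 + Real.exp (A p)) ^ 2) * (B p) ^ 2 := by
      rw [zero_mul, add_zero]; ring
    rw [this]
    have hB2 : (B p) ^ 2 = (u p.1 - u p.2) ^ 2 := by rw [hB]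
    rw [hB2]
    nlinarith [sq_nonneg (u p.1 - u p.2)]
  linarith [hsum, hmid.ge, hmid.le]
end
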